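/- Let φ : ℝ × ℝ → ℝ be smooth with φ_x nowhere zero. Suppose φ_t = −(1/2)φ² + f₁(t)φ + f₂ where f₂ is a constant and f₁, γ : ℝ → ℝ satisfy f₁' = γ and γ' = f₁·γ. Define v = φ_x and u = (1/φ_x)(φ_t − φ_xxx − γ). Then u_t = 3v_x. -/

import Mathlib

/-- Partial derivative in the first (space) variable. -/
noncomputable def pdx (f : ℝ → ℝ → ℝ) : ℝ → ℝ → ℝ := fun x t => deriv (fun y => f y t) x

/-- Partial derivative in the second (time) variable. -/
noncomputable def pdt (f : ℝ → ℝ → ℝ) : ℝ → ℝ → ℝ := fun x t => deriv (fun s => f x s) t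

section Aux
variable {φ : ℝ → ℝ → ℝ}

lemma hasDerivAt_fst (h : ContDiff ℝ (⊤ : ℕ∞) (Function.uncurry φ)) (x t : ℝ) :
    HasDerivAt (fun y => φ y t) (fderiv ℝ (Function.uncurry φ) (x, t) (1, 0)) x := by
  have hF := (h.differentiable (by simp) (x, t)).hasFDerivAt
  have hg : HasDerivAt (fun y : ℝ => (y, t)) ((1 : ℝ), (0 : ℝ)) x :=
    (hasDerivAt_id x).prodMk (hasDerivAt_const x t)
  exact hF.comp_hasDerivAt x hg

lemma hasDerivAt_snd (h : ContDiff ℝ (⊤ : ℕ∞) (Function.uncurry φ)) (x t : ℝ) :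
    HasDerivAt (fun s => φ x s) (fderiv ℝ (Function.uncurry φ) (x, t) (0, 1)) t := by
  have hF := (h.differentiable (by simp) (x, t)).hasFDerivAt
  have hg : HasDerivAt (fun s : ℝ => (x, s)) ((0 : ℝ), (1 : ℝ)) t :=
    (hasDerivAt_const t x).prodMk (hasDerivAt_id t)
  exact hF.comp_hasDerivAt t hg

lemma hasDerivAt_pdx (h : ContDiff ℝ (⊤ : ℕ∞) (Function.uncurry φ)) (x t : ℝ) :
    HasDerivAt (fun y => φ y t) (pdx φ x t) x := by
  have H := hasDerivAt_fst h x t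
  simpa [pdx, H.deriv] using H

lemma hasDerivAt_pdt (h : ContDiff ℝ (⊤ : ℕ∞) (Function.uncurry φ)) (x t : ℝ) :
    HasDerivAt (fun s => φ x s) (pdt φ x t) t := by
  have H := hasDerivAt_snd h x t
  simpa [pdt, H.deriv] using H

lemma contDiff_pd_aux (h : ContDiff ℝ (⊤ : ℕ∞) (Function.uncurry φ)) (v : ℝ × ℝ) :
    ContDiff ℝ (⊤ : ℕ∞) (fun p : ℝ × ℝ => fderiv ℝ (Function.uncurry φ) p v) :=
  (h.fderiv_right (by simp)).clm_apply contDiff_const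

lemma contDiff_pdx (h : ContDiff ℝ (⊤ : ℕ∞) (Function.uncurry φ)) :
    ContDiff ℝ (⊤ : ℕ∞) (Function.uncurry (pdx φ)) := by
  have : Function.uncurry (pdx φ)
      = fun p : ℝ × ℝ => fderiv ℝ (Function.uncurry φ) p (1, 0) :=
    funext fun p => (hasDerivAt_fst h p.1 p.2).deriv
  rw [this]; exact contDiff_pd_aux h _

lemma contDiff_pdt (h : ContDiff ℝ (⊤ : ℕ∞) (Function.uncurry φ)) :
    ContDiff ℝ (⊤ : ℕ∞) (Function.uncurry (pdt φ)) := by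
  have : Function.uncurry (pdt φ)
      = fun p : ℝ × ℝ => fderiv ℝ (Function.uncurry φ) p (0, 1) :=
    funext fun p => (hasDerivAt_snd h p.1 p.2).deriv
  rw [this]; exact contDiff_pd_aux h _

lemma pdx_congr (f g : ℝ → ℝ → ℝ) (x t : ℝ) (h : ∀ y, f y t = g y t) :
    pdx f x t = pdx g x t := by
  unfold pdx; congr 1; funext y; exact h y

/-- Clairaut: mixed partials commute for smooth functions. -/
lemma pd_comm (h : ContDiff ℝ (⊤ : ℕ∞) (Function.uncurry φ)) (x t : ℝ) :
    pdt (pdx φ) x t = pdx (pdt φ) x t := by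
  set F := Function.uncurry φ with hF
  have hsym : IsSymmSndFDerivAt ℝ F (x, t) :=
    h.contDiffAt.isSymmSndFDerivAt (by simp; exact WithTop.coe_le_coe.2 (le_top : (2:ℕ∞) ≤ ⊤))
  have hD : ContDiff ℝ ((⊤:ℕ∞) : WithTop ℕ∞) (fderiv ℝ F) := h.fderiv_right (by simp)
  have hdd : ∀ p : ℝ × ℝ, HasFDerivAt (fderiv ℝ F) (fderiv ℝ (fderiv ℝ F) p) p := fun p =>
    ((hD.differentiable (by simp)) p).hasFDerivAt
  have e1 : pdt (pdx φ) x t = fderiv ℝ (fderiv ℝ F) (x, t) (0, 1) (1, 0) := by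
    have hval : (fun s => pdx φ x s) = fun s => fderiv ℝ F (x, s) (1, 0) :=
      funext fun s => (hasDerivAt_fst h x s).deriv
    have hc : HasDerivAt (fun s : ℝ => (x, s)) ((0 : ℝ), (1 : ℝ)) t :=
      (hasDerivAt_const t x).prodMk (hasDerivAt_id t)
    have h1 : HasDerivAt (fun s : ℝ => fderiv ℝ F (x, s))
        (fderiv ℝ (fderiv ℝ F) (x, t) (0, 1)) t := (hdd (x, t)).comp_hasDerivAt t hc
    have H := h1.clm_apply (hasDerivAt_const t ((1:ℝ), (0:ℝ)))
    rw [show pdt (pdx φ) x t = deriv (fun s => pdx φ x s) t from rfl, hval, H.deriv]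
    simp
  have e2 : pdx (pdt φ) x t = fderiv ℝ (fderiv ℝ F) (x, t) (1, 0) (0, 1) := by
    have hval : (fun y => pdt φ y t) = fun y => fderiv ℝ F (y, t) (0, 1) :=
      funext fun y => (hasDerivAt_snd h y t).deriv
    have hc : HasDerivAt (fun y : ℝ => (y, t)) ((1 : ℝ), (0 : ℝ)) x :=
      (hasDerivAt_id x).prodMk (hasDerivAt_const x t)
    have h1 : HasDerivAt (fun y : ℝ => fderiv ℝ F (y, t))
        (fderiv ℝ (fderiv ℝ F) (x, t) (1, 0)) x := (hdd (x, t)).comp_hasDerivAt x hc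
    have H := h1.clm_apply (hasDerivAt_const x ((0:ℝ), (1:ℝ)))
    rw [show pdx (pdt φ) x t = deriv (fun y => pdt φ y t) x from rfl, hval, H.deriv]
    simp
  rw [e1, e2, hsym.eq]

end Aux

/-- For the family of solutions obtained from the third constraint of the Ito
Lax pair, the first Ito equation `u_t = 3 v_x` holds, where `v = φ_x` and
`u = (φ_t − φ_xxx − γ)/φ_x`. -/
theorem stmt_10 (φ : ℝ → ℝ → ℝ) (f₁ γ : ℝ → ℝ) (f₂ : ℝ)
    (hφ : ContDiff ℝ (⊤ : ℕ∞) (Function.uncurry φ))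
    (hf₁ : ContDiff ℝ (⊤ : ℕ∞) f₁) (hγ : ContDiff ℝ (⊤ : ℕ∞) γ)
    (hφx : ∀ x t, pdx φ x t ≠ 0)
    (ht : ∀ x t, pdt φ x t = -(1 / 2) * φ x t ^ 2 + f₁ t * φ x t + f₂)
    (hf₁' : ∀ t, deriv f₁ t = γ t)
    (hγ' : ∀ t, deriv γ t = f₁ t * γ t)
    (u : ℝ → ℝ → ℝ)
    (hu : ∀ x t, u x t = (pdt φ x t - pdx (pdx (pdx φ)) x t - γ t) / pdx φ x t) :
    ∀ x t, pdt u x t = 3 * pdx (fun x t => pdx φ x t) x t := by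
  have h0 : ContDiff ℝ (⊤ : ℕ∞) (Function.uncurry φ) := hφ.of_le (by simp)
  have h1 : ContDiff ℝ (⊤ : ℕ∞) (Function.uncurry (pdx φ)) := contDiff_pdx h0
  have h2 : ContDiff ℝ (⊤ : ℕ∞) (Function.uncurry (pdx (pdx φ))) := contDiff_pdx h1
  have h3 : ContDiff ℝ (⊤ : ℕ∞) (Function.uncurry (pdx (pdx (pdx φ)))) := contDiff_pdx h2
  have hT : ContDiff ℝ (⊤ : ℕ∞) (Function.uncurry (pdt φ)) := contDiff_pdt h0
  -- first x-derivative of pdt φ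
  have hq1 : ∀ x t, pdx (pdt φ) x t = (f₁ t - φ x t) * pdx φ x t := by
    intro x t
    have hp := hasDerivAt_pdx h0 x t
    have H : HasDerivAt (fun y => -(1 / 2) * φ y t ^ 2 + f₁ t * φ y t + f₂)
        (-(1 / 2) * ((2 : ℕ) * φ x t ^ (2 - 1) * pdx φ x t) + f₁ t * pdx φ x t) x :=
      (((hp.pow 2).const_mul (-(1 / 2))).add (hp.const_mul (f₁ t))).add_const f₂
    have e : pdx (pdt φ) x t
        = deriv (fun y => -(1 / 2) * φ y t ^ 2 + f₁ t * φ y t + f₂) x :=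
      pdx_congr (pdt φ) (fun y s => -(1 / 2) * φ y s ^ 2 + f₁ s * φ y s + f₂) x t (fun y => ht y t)
    rw [e, H.deriv]; push_cast; ring
  have hq2 : ∀ x t, pdx (pdx (pdt φ)) x t
      = -(pdx φ x t) ^ 2 + (f₁ t - φ x t) * pdx (pdx φ) x t := by
    intro x t
    have hp := hasDerivAt_pdx h0 x t
    have hp1 := hasDerivAt_pdx h1 x t
    have H : HasDerivAt (fun y => (f₁ t - φ y t) * pdx φ y t)
        ((0 - pdx φ x t) * pdx φ x t + (f₁ t - φ x t) * pdx (pdx φ) x t) x :=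
      ((hasDerivAt_const x (f₁ t)).sub hp).mul hp1
    have e : pdx (pdx (pdt φ)) x t = deriv (fun y => (f₁ t - φ y t) * pdx φ y t) x :=
      pdx_congr (pdx (pdt φ)) (fun y s => (f₁ s - φ y s) * pdx φ y s) x t (fun y => hq1 y t)
    rw [e, H.deriv]; ring
  have hq3 : ∀ x t, pdx (pdx (pdx (pdt φ))) x t
      = -(3 * pdx φ x t * pdx (pdx φ) x t) + (f₁ t - φ x t) * pdx (pdx (pdx φ)) x t := by
    intro x t
    have hp := hasDerivAt_pdx h0 x t
    have hp1 := hasDerivAt_pdx h1 x t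
    have hp2 := hasDerivAt_pdx h2 x t
    have H : HasDerivAt (fun y => -(pdx φ y t) ^ 2 + (f₁ t - φ y t) * pdx (pdx φ) y t)
        (-((2 : ℕ) * pdx φ x t ^ (2 - 1) * pdx (pdx φ) x t)
          + ((0 - pdx φ x t) * pdx (pdx φ) x t + (f₁ t - φ x t) * pdx (pdx (pdx φ)) x t)) x :=
      ((hp1.pow 2).neg.add (((hasDerivAt_const x (f₁ t)).sub hp).mul hp2))
    have e : pdx (pdx (pdx (pdt φ))) x t
        = deriv (fun y => -(pdx φ y t) ^ 2 + (f₁ t - φ y t) * pdx (pdx φ) y t) x :=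
      pdx_congr (pdx (pdx (pdt φ))) (fun y s => -(pdx φ y s) ^ 2 + (f₁ s - φ y s) * pdx (pdx φ) y s) x t (fun y => hq2 y t)
    rw [e, H.deriv]; push_cast; ring
  -- Clairaut chains
  have e1 : ∀ x t, pdt (pdx φ) x t = pdx (pdt φ) x t := pd_comm h0
  have e2 : ∀ x t, pdt (pdx (pdx φ)) x t = pdx (pdx (pdt φ)) x t := fun x t =>
    (pd_comm h1 x t).trans (pdx_congr _ _ x t (fun y => e1 y t))
  have e3 : ∀ x t, pdt (pdx (pdx (pdx φ))) x t = pdx (pdx (pdx (pdt φ))) x t := fun x t =>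
    (pd_comm h2 x t).trans (pdx_congr _ _ x t (fun y => e2 y t))
  -- time derivative of pdt φ
  have htt : ∀ x t, pdt (pdt φ) x t
      = (f₁ t - φ x t) * pdt φ x t + γ t * φ x t := by
    intro x t
    have hpt := hasDerivAt_pdt h0 x t
    have hf₁t : HasDerivAt f₁ (γ t) t := by
      have := (hf₁.differentiable (by simp) t).hasDerivAt
      rwa [hf₁' t] at this
    have H : HasDerivAt (fun s => -(1 / 2) * φ x s ^ 2 + f₁ s * φ x s + f₂)
        (-(1 / 2) * ((2 : ℕ) * φ x t ^ (2 - 1) * pdt φ x t)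
          + (γ t * φ x t + f₁ t * pdt φ x t)) t :=
      (((hpt.pow 2).const_mul (-(1 / 2))).add (hf₁t.mul hpt)).add_const f₂
    have e : pdt (pdt φ) x t
        = deriv (fun s => -(1 / 2) * φ x s ^ 2 + f₁ s * φ x s + f₂) t := by
      unfold pdt; congr 1; funext s; exact ht x s
    rw [e, H.deriv]; push_cast; ring
  intro x t
  have hγt : HasDerivAt γ (f₁ t * γ t) t := by
    have := (hγ.of_le (by simp) : ContDiff ℝ (⊤:ℕ∞) γ).differentiable (by simp) t |>.hasDerivAt
    rwa [hγ' t] at this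
  have hpt' := hasDerivAt_pdt hT x t
  have hp3' := hasDerivAt_pdt h3 x t
  have hpx' := hasDerivAt_pdt h1 x t
  have HU : HasDerivAt (fun s => u x s)
      (((pdt (pdt φ) x t - pdt (pdx (pdx (pdx φ))) x t - f₁ t * γ t) * pdx φ x t
        - (pdt φ x t - pdx (pdx (pdx φ)) x t - γ t) * pdt (pdx φ) x t)
        / (pdx φ x t) ^ 2) t := by
    have H := ((hpt'.sub hp3').sub hγt).div hpx' (hφx x t)
    have e : (fun s => u x s)
        = fun s => (pdt φ x s - pdx (pdx (pdx φ)) x s - γ s) / pdx φ x s :=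
      funext fun s => hu x s
    rw [e]; exact H
  show pdt u x t = 3 * pdx (pdx φ) x t
  rw [show pdt u x t = deriv (fun s => u x s) t from rfl, HU.deriv,
    htt x t, e3 x t, hq3 x t, e1 x t, hq1 x t]
  field_simp [hφx x t]
  ring
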